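/- arXiv:2104.14025 — 5 statements merged into one kernel-verified Lean document; each statement's English description precedes it below -/
import Mathlib

section
/- Stuttering equivalence of pointed traces is an equivalence relation: it is reflexive, symmetric, and transitive on the set of pointed traces. -/
/-!
Reflexivity and symmetry are immediate; transitivity is the point. Matchings `(i, j)` of `(x, y)`
and `(i', j')` of `(y, z)` partition `y` into blocks along `j` and along `i'`, and these two
partitions need not share boundaries. Both are therefore coarsened along a common sequence `m` on
`y`: `m 0` is the base point and `m (k + 1)` is the larger of the next `j`-boundary and the next
`i'`-boundary after `m k`. Then `[m k, m (k + 1))` is covered by the `j`-block and the `i'`-block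
of `m k`, so `y` is constant there, and grouping the blocks of either partition along `m` again
gives blocks on which `y` is constant. After this coarsening the `k`-th `y`-blocks of the two
matchings carry the same value `y (m k)`, and the matchings compose.
-/

/-- Two pointed traces `(σ, p)` and `(σ', p')` are stuttering equivalent if there exist
strictly increasing sequences of indices `p = i₀ < i₁ < ...` and `p' = j₀ < j₁ < ...`
such that for all `k` and all `l ∈ [i_k, i_{k+1})`, `l' ∈ [j_k, j_{k+1})`, `σ l = σ' l'`. -/
def StutterEquivPointed {A : Type*} (x y : (ℕ → A) × ℕ) : Prop :=
  ∃ i j : ℕ → ℕ, i 0 = x.2 ∧ j 0 = y.2 ∧ StrictMono i ∧ StrictMono j ∧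
    ∀ k l l', i k ≤ l → l < i (k + 1) → j k ≤ l' → l' < j (k + 1) → x.1 l = y.1 l'

section Blocks

variable {f : ℕ → ℕ}

/-- For strictly monotone `f` and `f 0 ≤ n`, the `k` with `f k ≤ n < f (k + 1)`. -/
noncomputable def blockIndex (f : ℕ → ℕ) (n : ℕ) : ℕ :=
  sInf {k | n < f (k + 1)}

noncomputable def nextBoundary (f : ℕ → ℕ) (n : ℕ) : ℕ :=
  f (blockIndex f n + 1)

theorem lt_nextBoundary (hf : StrictMono f) (n : ℕ) : n < nextBoundary f n :=
  Nat.sInf_mem (s := {k | n < f (k + 1)}) ⟨n, n.lt_succ_self.trans_le hf.le_apply⟩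

theorem apply_blockIndex_le {n : ℕ} (hn : f 0 ≤ n) : f (blockIndex f n) ≤ n := by
  rcases h : blockIndex f n with _ | k
  · exact hn
  · exact not_lt.1 <|
      Nat.notMem_of_lt_sInf (s := {k | n < f (k + 1)}) (show k < blockIndex f n by omega)

theorem blockIndex_apply (hf : StrictMono f) (k : ℕ) : blockIndex f (f k) = k :=
  le_antisymm (Nat.sInf_le (s := {k' | f k < f (k' + 1)}) (hf k.lt_succ_self))
    (Nat.lt_succ_iff.1 (hf.lt_iff_lt.1 (lt_nextBoundary hf (f k))))

theorem strictMono_blockIndex_comp (hf : StrictMono f) {m : ℕ → ℕ}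
    (hm : ∀ k, nextBoundary f (m k) ≤ m (k + 1)) : StrictMono (blockIndex f ∘ m) :=
  strictMono_nat_of_lt_succ fun k =>
    Nat.succ_lt_succ_iff.1 (hf.lt_iff_lt.1 ((hm k).trans_lt (lt_nextBoundary hf _)))

noncomputable def mergeBoundaries (f g : ℕ → ℕ) : ℕ → ℕ
  | 0 => f 0
  | k + 1 => max (nextBoundary f (mergeBoundaries f g k)) (nextBoundary g (mergeBoundaries f g k))

theorem strictMono_mergeBoundaries (hf : StrictMono f) (g : ℕ → ℕ) :
    StrictMono (mergeBoundaries f g) :=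
  strictMono_nat_of_lt_succ fun _ => (lt_nextBoundary hf _).trans_le (le_max_left _ _)

end Blocks

section

variable {A : Type*}

def ConstOnBlocks (σ : ℕ → A) (f : ℕ → ℕ) : Prop :=
  ∀ k n, f k ≤ n → n < f (k + 1) → σ n = σ (f k)

namespace ConstOnBlocks

variable {σ : ℕ → A} {f m : ℕ → ℕ}

theorem apply_blockIndex (h : ConstOnBlocks σ f) (hf : StrictMono f) {n : ℕ} (hn : f 0 ≤ n) :
    σ (f (blockIndex f n)) = σ n :=
  (h _ n (apply_blockIndex_le hn) (lt_nextBoundary hf n)).symm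

theorem apply_eq_of_lt_nextBoundary (h : ConstOnBlocks σ f) (hf : StrictMono f) {a n : ℕ}
    (ha : f 0 ≤ a) (han : a ≤ n) (hn : n < nextBoundary f a) : σ n = σ a :=
  (h _ n ((apply_blockIndex_le ha).trans han) hn).trans (h.apply_blockIndex hf ha)

theorem mergeBoundaries {g : ℕ → ℕ} (hσf : ConstOnBlocks σ f) (hσg : ConstOnBlocks σ g)
    (hf : StrictMono f) (hg : StrictMono g) (h0 : g 0 ≤ f 0) :
    ConstOnBlocks σ (_root_.mergeBoundaries f g) := by
  intro k n h₁ h₂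
  have hf0 : f 0 ≤ _root_.mergeBoundaries f g k :=
    (strictMono_mergeBoundaries hf g).monotone (Nat.zero_le k)
  rcases lt_max_iff.1 h₂ with h | h
  · exact hσf.apply_eq_of_lt_nextBoundary hf hf0 h₁ h
  · exact hσg.apply_eq_of_lt_nextBoundary hg (h0.trans hf0) h₁ h

/-- The `k`-th block of `f ∘ blockIndex f ∘ m` is the union of the `f`-blocks from the one
containing `m k` up to, excluding, the one containing `m (k + 1)`. -/
theorem comp_blockIndex (hσf : ConstOnBlocks σ f) (hσm : ConstOnBlocks σ m) (hf : StrictMono f)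
    (hm : Monotone m) (h0 : f 0 ≤ m 0) :
    ConstOnBlocks σ (f ∘ blockIndex f ∘ m) := by
  intro k n h₁ h₂
  simp only [Function.comp_apply] at h₁ h₂ ⊢
  have hfm : ∀ k, f 0 ≤ m k := fun k => h0.trans (hm (Nat.zero_le k))
  rcases lt_or_ge n (nextBoundary f (m k)) with hn | hn
  · exact hσf _ n h₁ hn
  · -- past the block of `m k`, `n` lies in `[m k, m (k + 1))`
    have hmn : m k ≤ n := (lt_nextBoundary hf _).le.trans hn
    have hnm : n < m (k + 1) := h₂.trans_le (apply_blockIndex_le (hfm _))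
    exact (hσm k n hmn hnm).trans (hσf.apply_blockIndex hf (hfm k)).symm

end ConstOnBlocks

theorem exists_common_coarsening {σ : ℕ → A} {f g : ℕ → ℕ} (hf : StrictMono f) (hg : StrictMono g)
    (h0 : g 0 = f 0) (hσf : ConstOnBlocks σ f) (hσg : ConstOnBlocks σ g) :
    ∃ c d : ℕ → ℕ, StrictMono c ∧ c 0 = 0 ∧ StrictMono d ∧ d 0 = 0 ∧
      ConstOnBlocks σ (f ∘ c) ∧ ConstOnBlocks σ (g ∘ d) ∧ ∀ k, σ (f (c k)) = σ (g (d k)) := by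
  set m := mergeBoundaries f g
  have hm : Monotone m := (strictMono_mergeBoundaries hf g).monotone
  have hσm : ConstOnBlocks σ m := hσf.mergeBoundaries hσg hf hg h0.le
  have hfm : ∀ k, f 0 ≤ m k := fun k => hm (Nat.zero_le k)
  have hstep_f : ∀ k, nextBoundary f (m k) ≤ m (k + 1) := fun _ => le_max_left _ _
  have hstep_g : ∀ k, nextBoundary g (m k) ≤ m (k + 1) := fun _ => le_max_right _ _
  refine ⟨blockIndex f ∘ m, blockIndex g ∘ m, strictMono_blockIndex_comp hf hstep_f,
    blockIndex_apply hf 0, strictMono_blockIndex_comp hg hstep_g, ?_,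
    hσf.comp_blockIndex hσm hf hm le_rfl, hσg.comp_blockIndex hσm hg hm h0.le,
    fun k => ?_⟩
  · change blockIndex g (f 0) = 0
    rw [← h0, blockIndex_apply hg]
  · exact (hσf.apply_blockIndex hf (hfm k)).trans
      (hσg.apply_blockIndex hg (h0.le.trans (hfm k))).symm

structure StutterMatching (x y : (ℕ → A) × ℕ) (i j : ℕ → ℕ) : Prop where
  left_zero : i 0 = x.2
  right_zero : j 0 = y.2
  strictMono_left : StrictMono i
  strictMono_right : StrictMono j
  apply_eq : ∀ k l l', i k ≤ l → l < i (k + 1) → j k ≤ l' → l' < j (k + 1) → x.1 l = y.1 l'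

theorem stutterEquivPointed_iff {x y : (ℕ → A) × ℕ} :
    StutterEquivPointed x y ↔ ∃ i j, StutterMatching x y i j :=
  ⟨fun ⟨i, j, h₁, h₂, h₃, h₄, h₅⟩ => ⟨i, j, h₁, h₂, h₃, h₄, h₅⟩,
    fun ⟨i, j, h₁, h₂, h₃, h₄, h₅⟩ => ⟨i, j, h₁, h₂, h₃, h₄, h₅⟩⟩

namespace StutterMatching

variable {x y z : (ℕ → A) × ℕ} {i j i' j' : ℕ → ℕ}

theorem refl (x : (ℕ → A) × ℕ) : StutterMatching x x (x.2 + ·) (x.2 + ·) where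
  left_zero := x.2.add_zero
  right_zero := x.2.add_zero
  strictMono_left := strictMono_id.const_add x.2
  strictMono_right := strictMono_id.const_add x.2
  apply_eq k l l' h₁ h₂ h₃ h₄ := congrArg x.1 (by omega)

theorem symm (h : StutterMatching x y i j) : StutterMatching y x j i where
  left_zero := h.right_zero
  right_zero := h.left_zero
  strictMono_left := h.strictMono_right
  strictMono_right := h.strictMono_left
  apply_eq k l l' h₁ h₂ h₃ h₄ := (h.apply_eq k l' l h₃ h₄ h₁ h₂).symm

theorem constOnBlocks_left (h : StutterMatching x y i j) : ConstOnBlocks x.1 i := by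
  intro k n h₁ h₂
  have hjk : j k < j (k + 1) := h.strictMono_right k.lt_succ_self
  exact (h.apply_eq k n (j k) h₁ h₂ le_rfl hjk).trans
    (h.apply_eq k (i k) (j k) le_rfl (h₁.trans_lt h₂) le_rfl hjk).symm

theorem constOnBlocks_right (h : StutterMatching x y i j) : ConstOnBlocks y.1 j :=
  h.symm.constOnBlocks_left

theorem comp (h : StutterMatching x y i j) {c : ℕ → ℕ} (hc : StrictMono c) (hc0 : c 0 = 0)
    (hy : ConstOnBlocks y.1 (j ∘ c)) : StutterMatching x y (i ∘ c) (j ∘ c) where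
  left_zero := by simp [hc0, h.left_zero]
  right_zero := by simp [hc0, h.right_zero]
  strictMono_left := h.strictMono_left.comp hc
  strictMono_right := h.strictMono_right.comp hc
  apply_eq k l l' h₁ h₂ h₃ h₄ := by
    have hi := h.strictMono_left
    have hl : i 0 ≤ l := (hi.monotone (Nat.zero_le _)).trans h₁
    set s := blockIndex i l
    have hs₁ : i s ≤ l := apply_blockIndex_le hl
    have hs₂ : l < i (s + 1) := lt_nextBoundary hi l
    have hcs : c k ≤ s := Nat.lt_succ_iff.1 (hi.lt_iff_lt.1 (h₁.trans_lt hs₂))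
    have hsc : s < c (k + 1) := hi.lt_iff_lt.1 (hs₁.trans_lt h₂)
    have hj := h.strictMono_right
    calc x.1 l = y.1 (j s) := h.apply_eq s l (j s) hs₁ hs₂ le_rfl (hj s.lt_succ_self)
      _ = y.1 (j (c k)) := hy k (j s) (hj.monotone hcs) (hj hsc)
      _ = y.1 l' := (hy k l' h₃ h₄).symm

theorem trans (h₁ : StutterMatching x y i j) (h₂ : StutterMatching y z i' j')
    (hy : ∀ k, y.1 (j k) = y.1 (i' k)) : StutterMatching x z i j' where
  left_zero := h₁.left_zero
  right_zero := h₂.right_zero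
  strictMono_left := h₁.strictMono_left
  strictMono_right := h₂.strictMono_right
  apply_eq k l l' hl₁ hl₂ hl₃ hl₄ :=
    calc x.1 l = y.1 (j k) :=
          h₁.apply_eq k l (j k) hl₁ hl₂ le_rfl (h₁.strictMono_right k.lt_succ_self)
      _ = y.1 (i' k) := hy k
      _ = z.1 l' := h₂.apply_eq k (i' k) l' le_rfl (h₂.strictMono_left k.lt_succ_self) hl₃ hl₄

end StutterMatching

namespace StutterEquivPointed

variable {x y z : (ℕ → A) × ℕ}

theorem refl (x : (ℕ → A) × ℕ) : StutterEquivPointed x x :=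
  stutterEquivPointed_iff.2 ⟨_, _, .refl x⟩

theorem symm (h : StutterEquivPointed x y) : StutterEquivPointed y x :=
  let ⟨_, _, h⟩ := stutterEquivPointed_iff.1 h
  stutterEquivPointed_iff.2 ⟨_, _, h.symm⟩

theorem trans (hxy : StutterEquivPointed x y) (hyz : StutterEquivPointed y z) :
    StutterEquivPointed x z := by
  obtain ⟨i, j, h₁⟩ := stutterEquivPointed_iff.1 hxy
  obtain ⟨i', j', h₂⟩ := stutterEquivPointed_iff.1 hyz
  obtain ⟨c, d, hc, hc0, hd, hd0, hyc, hyd, hcd⟩ :=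
    exists_common_coarsening h₁.strictMono_right h₂.strictMono_left
      (h₂.left_zero.trans h₁.right_zero.symm) h₁.constOnBlocks_right h₂.constOnBlocks_left
  exact stutterEquivPointed_iff.2
    ⟨_, _, (h₁.comp hc hc0 hyc).trans (h₂.symm.comp hd hd0 hyd).symm hcd⟩

end StutterEquivPointed

end

/-- Stuttering equivalence of pointed traces is an equivalence relation. -/
theorem stutterEquivPointed_equivalence {A : Type*} :
    Equivalence (StutterEquivPointed (A := A)) :=
  ⟨StutterEquivPointed.refl, StutterEquivPointed.symm, StutterEquivPointed.trans⟩
end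

section
/- Every stuttering expansion of a path of a Kripke structure K corresponds to a path of the stuttering Kripke structure K^st: if ρ is a path of K and ρ' is obtained from ρ by replacing each state s at a repeated (stuttered) position with its stuttering copy s^st, then ρ' is a path of K^st, provided each state of ρ is repeated only finitely often. -/
/-- A Kripke structure over states `S` with labels in `L`. -/
structure Kripke (S L : Type*) where
  init : Set S
  trans : S → S → Prop
  total : ∀ s, ∃ s', trans s s'
  label : S → L

/-- `ρ` is a path of `K`. -/
def IsPath {S L : Type*} (K : Kripke S L) (ρ : ℕ → S) : Prop :=
  ρ 0 ∈ K.init ∧ ∀ k, K.trans (ρ k) (ρ (k + 1))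

/-- The stuttering Kripke structure `K^st` over states `S ⊕ S` (`Sum.inr s` is the
stuttering copy `s^st`). -/
def Kst {S AP : Type*} (K : Kripke S (Set AP)) : Kripke (S ⊕ S) (Set AP × Bool) where
  init := Sum.inl '' K.init
  trans := fun x y =>
    match x, y with
    | Sum.inl s, Sum.inl s' => K.trans s s'
    | Sum.inl s, Sum.inr s' => s = s'
    | Sum.inr s, Sum.inr s' => s = s'
    | Sum.inr s, Sum.inl s' => K.trans s s'
  total := by
    intro x
    cases x with
    | inl s => obtain ⟨s', hs'⟩ := K.total s; exact ⟨Sum.inl s', hs'⟩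
    | inr s => exact ⟨Sum.inr s, rfl⟩
  label := fun x =>
    match x with
    | Sum.inl s => (K.label s, false)
    | Sum.inr s => (K.label s, true)

/-! Inside the `k`-th block `ρ'` only visits `ρ k` and its copy, and from either of them `K^st` can
move to the copy (staying in the block) or follow a `K`-edge of `ρ k` (entering block `k + 1`). -/

theorem StrictMono.exists_mem_Ico_succ {j : ℕ → ℕ} (hj : StrictMono j) {l : ℕ} (hl : j 0 ≤ l) :
    ∃ k, l ∈ Set.Ico (j k) (j (k + 1)) := by
  have hcover := iUnion_Ico_map_succ_eq_Ici (f := j) (fun k ↦ hj.monotone k.zero_le)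
    hj.not_bddAbove_range_of_wellFoundedLT
  have hl' : l ∈ ⋃ k, Set.Ico (j k) (j (Order.succ k)) := hcover ▸ hl
  simpa only [Order.succ_eq_add_one, Set.mem_iUnion] using hl'

section Kst

variable {S AP : Type*} (K : Kripke S (Set AP)) {x : S ⊕ S} {s : S}

theorem Kst_trans_inr_self (hx : x = Sum.inl s ∨ x = Sum.inr s) :
    (Kst K).trans x (Sum.inr s) := by
  rcases hx with rfl | rfl <;> rfl

theorem Kst_trans_inl_of_trans {s' : S} (hx : x = Sum.inl s ∨ x = Sum.inr s)
    (h : K.trans s s') : (Kst K).trans x (Sum.inl s') := by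
  rcases hx with rfl | rfl <;> exact h

end Kst

/-- Every stuttering expansion of a path of `K` is a path of `K^st`: if `ρ'` is
obtained from a path `ρ` of `K` by replacing each state `ρ k` with a finite nonempty
block `ρ k, (ρ k)^st, ..., (ρ k)^st` (blocks given by a strictly increasing sequence
`j` with `j 0 = 0`; finiteness of blocks corresponds to each state being repeated only
finitely often), then `ρ'` is a path of `K^st`. -/
theorem stutterExpansion_path_of_Kst {S AP : Type*} (K : Kripke S (Set AP))
    (ρ : ℕ → S) (hρ : IsPath K ρ) (j : ℕ → ℕ) (hj0 : j 0 = 0) (hj : StrictMono j)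
    (ρ' : ℕ → S ⊕ S)
    (hfirst : ∀ k, ρ' (j k) = Sum.inl (ρ k))
    (hstutter : ∀ k l, j k < l → l < j (k + 1) → ρ' l = Sum.inr (ρ k)) :
    IsPath (Kst K) ρ' := by
  have hblock : ∀ k l, l ∈ Set.Ico (j k) (j (k + 1)) →
      ρ' l = Sum.inl (ρ k) ∨ ρ' l = Sum.inr (ρ k) := by
    rintro k l ⟨hkl, hlk⟩
    rcases hkl.eq_or_lt with rfl | hkl
    · exact .inl (hfirst k)
    · exact .inr (hstutter k l hkl hlk)
  refine ⟨⟨ρ 0, hρ.1, by rw [← hfirst 0, hj0]⟩, fun l ↦ ?_⟩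
  obtain ⟨k, hkl, hlk⟩ := hj.exists_mem_Ico_succ (hj0 ▸ l.zero_le)
  have hcur := hblock k l ⟨hkl, hlk⟩
  rcases (Nat.add_one_le_of_lt hlk).lt_or_eq with hnext | hnext
  · rw [hstutter k (l + 1) (Nat.lt_add_one_of_le hkl) hnext]
    exact Kst_trans_inr_self K hcur
  · rw [hnext, hfirst]
    exact Kst_trans_inl_of_trans K hcur (hρ.2 k)
end

section
/- Every path ρ' of the stuttering Kripke structure K^st whose trace satisfies □◇¬st (i.e., visits non-stuttering states infinitely often) can be compressed, by removing all stuttering states, into an infinite path ρ of K, and ρ' is a stuttering expansion of ρ. -/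
/-- `σ'` is a stuttering expansion of `σ`. -/
def StutterExpansion {A : Type*} (σ σ' : ℕ → A) : Prop :=
  ∃ j : ℕ → ℕ, j 0 = 0 ∧ StrictMono j ∧
    ∀ k l, j k ≤ l → l < j (k + 1) → σ k = σ' l

/-!
Keep exactly the positions of `ρ'` carrying a non-stuttering state; by fairness they are
enumerated by a strictly increasing `j = Nat.nth _` with `j 0 = 0`, since paths of `K^st`
start in `S`. Entering a stuttering copy `s^st` keeps the underlying state `s`, so the
underlying state of `ρ'` is constant on each block `[j k, j (k+1))`, and the step from the
last position of a block into `j (k+1)` is a transition of `K` from `ρ k` to `ρ (k+1)`.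
-/

open Nat Filter

section Compression

variable {A : Type*} {σ : ℕ → A} {p : ℕ → Prop}

theorem eq_nth_of_nth_le_of_lt_nth_succ (hσ : ∀ l, ¬p (l + 1) → σ (l + 1) = σ l) {k l : ℕ}
    (hkl : nth p k ≤ l) (hl : l < nth p (k + 1)) : σ l = σ (nth p k) := by
  induction l, hkl using Nat.le_induction with
  | base => rfl
  | succ n hkn ih =>
    have hpn : ¬p (n + 1) := fun hpn => by
      have := le_nth_of_lt_nth_succ hl hpn
      omega
    rw [hσ n hpn, ih (by omega)]

theorem stutterExpansion_comp_nth (hp : (Set.ofPred p).Infinite) (hp0 : p 0)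
    (hσ : ∀ l, ¬p (l + 1) → σ (l + 1) = σ l) : StutterExpansion (σ ∘ nth p) σ :=
  ⟨nth p, nth_zero_of_zero hp0, nth_strictMono hp,
    fun _ _ hkl hl => (eq_nth_of_nth_le_of_lt_nth_succ hσ hkl hl).symm⟩

end Compression

section Kst

variable {S AP : Type*} {K : Kripke S (Set AP)} {x : S ⊕ S} {s : S}

theorem Kst_trans_inl (h : (Kst K).trans x (Sum.inl s)) : K.trans (Sum.elim id id x) s := by
  cases x <;> exact h

theorem Kst_trans_inr (h : (Kst K).trans x (Sum.inr s)) : Sum.elim id id x = s := by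
  cases x <;> exact h

end Kst

/-- Every path `ρ'` of `K^st` visiting non-stuttering states infinitely often
(`□◇¬st`) can be compressed, by removing all stuttering states, into an infinite path
`ρ` of `K`, and `ρ'` is a stuttering expansion of `ρ`. -/
theorem fair_Kst_path_compresses {S AP : Type*} (K : Kripke S (Set AP))
    (ρ' : ℕ → S ⊕ S) (hρ' : IsPath (Kst K) ρ')
    (hfair : ∀ k, ∃ l, k ≤ l ∧ ∃ s : S, ρ' l = Sum.inl s) :
    ∃ ρ : ℕ → S, IsPath K ρ ∧
      StutterExpansion ρ (fun k => Sum.elim id id (ρ' k)) := by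
  obtain ⟨⟨s₀, hs₀, h₀⟩, htrans⟩ := hρ'
  set σ : ℕ → S := fun l => Sum.elim id id (ρ' l)
  set p : ℕ → Prop := fun l => ∃ s, ρ' l = Sum.inl s
  have hp : (Set.ofPred p).Infinite :=
    Nat.frequently_atTop_iff_infinite.mp (frequently_atTop.mpr hfair)
  have hp0 : p 0 := ⟨s₀, h₀.symm⟩
  have hσ (l : ℕ) (hl : ¬p (l + 1)) : σ (l + 1) = σ l := by
    cases hs : ρ' (l + 1) with
    | inl s => exact absurd ⟨s, hs⟩ hl
    | inr s =>
      have := htrans l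
      rw [hs] at this
      simp [σ, hs, Kst_trans_inr this]
  refine ⟨σ ∘ nth p, ⟨?_, fun k => ?_⟩, stutterExpansion_comp_nth hp hp0 hσ⟩
  · simpa [σ, nth_zero_of_zero hp0, ← h₀] using hs₀
  · obtain ⟨s, hs⟩ := nth_mem_of_infinite hp (k + 1)
    have hlt := nth_strictMono hp k.lt_add_one
    have hblock :=
      eq_nth_of_nth_le_of_lt_nth_succ hσ (k := k) (l := nth p (k + 1) - 1) (by omega) (by omega)
    have hstep := htrans (nth p (k + 1) - 1)
    rw [Nat.sub_add_cancel (by omega), hs] at hstep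
    simpa [σ, hs, hblock] using Kst_trans_inl hstep
end

section
/- In the accelerated Kripke structure K^acc, the map acc from paths of K to paths of K^acc preserves the sequence of colors: the sequence of distinct consecutive colors (valuations of predicates P) along ρ equals the sequence of distinct consecutive colors along acc(ρ). -/
open Classical

/-- Two sequences have the same de-stuttered sequence (the sequence obtained by
collapsing consecutive equal elements) iff they are both stuttering expansions of a
common sequence. -/
def SameDestutter {A : Type*} (c₁ c₂ : ℕ → A) : Prop :=
  ∃ d : ℕ → A, StutterExpansion d c₁ ∧ StutterExpansion d c₂

/-- Position `k` is a change position of the sequence `c`: it is the initial position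
or the value differs from the preceding one. -/
def IsChange {C : Type*} (c : ℕ → C) (k : ℕ) : Prop :=
  k = 0 ∨ c k ≠ c (k - 1)

/-- The map `acc` from paths of `K` to paths of `K^acc` (states of `K^acc` are
`S ⊕ S`, with `Sum.inr s` the sink copy `s_⊥`): it keeps the initial state and the
states at which the color changes; if only finitely many color changes occur it pads
with the sink copy of the last kept state. -/
noncomputable def accPath {S C : Type*} (c : ℕ → C) (ρ : ℕ → S) : ℕ → S ⊕ S :=
  fun k =>
    if {m | IsChange c m}.Infinite ∨ k < {m | IsChange c m}.ncard then
      Sum.inl (ρ (Nat.nth (IsChange c) k))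
    else
      Sum.inr (ρ (Nat.nth (IsChange c) ({m | IsChange c m}.ncard - 1)))

/-! The path `acc ρ` visits `ρ` exactly at the change positions of the color sequence `c`, in
order, and then repeats the last one forever. Since `c` is constant between consecutive change
positions, `c` is a stuttering expansion of the color sequence along `acc ρ`, whose blocks are
delimited by the change positions (and, after the last one, by consecutive positions). -/

section Destutter

variable {A : Type*}

theorem StutterExpansion.refl (σ : ℕ → A) : StutterExpansion σ σ :=
  ⟨id, rfl, strictMono_id, fun k l hkl hlk => congrArg σ (by simp only [id] at hkl hlk; omega)⟩

variable {c : ℕ → A}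

theorem isChange_zero : IsChange c 0 := Or.inl rfl

theorem eq_of_forall_not_isChange {a l : ℕ} (hal : a ≤ l)
    (h : ∀ m, a < m → m ≤ l → ¬IsChange c m) : c l = c a := by
  induction l, hal using Nat.le_induction with
  | base => rfl
  | succ n han ih =>
    have hstep : c (n + 1) = c n := by
      by_contra hne
      exact h (n + 1) (by omega) le_rfl (Or.inr (by simpa using hne))
    rw [hstep, ih fun m ham hmn => h m ham (by omega)]

/-- Between two consecutive values of `j` there is no change position, so `c` is constant
there. -/
theorem stutterExpansion_comp_of_isChange_subset_range {j : ℕ → ℕ} (hj : StrictMono j)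
    (hchange : {m | IsChange c m} ⊆ Set.range j) : StutterExpansion (c ∘ j) c := by
  have hj0 : j 0 = 0 := by
    obtain ⟨i, hi⟩ := hchange isChange_zero
    exact Nat.eq_zero_of_le_zero (by simpa [hi] using hj.monotone (Nat.zero_le i))
  refine ⟨j, hj0, hj, fun k l hkl hlk => (eq_of_forall_not_isChange hkl ?_).symm⟩
  rintro m hkm hml hm
  obtain ⟨i, rfl⟩ := hchange hm
  have := hj.lt_iff_lt.1 hkm
  have := hj.lt_iff_lt.1 (hml.trans_lt hlk)
  omega

theorem IsChange.le_nth_ncard_sub_one {m : ℕ} (hm : IsChange c m)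
    (hf : {m | IsChange c m}.Finite) :
    m ≤ Nat.nth (IsChange c) ({m | IsChange c m}.ncard - 1) := by
  obtain ⟨n, hn, rfl⟩ := Nat.exists_lt_card_finite_nth_eq hf hm
  rw [Set.ncard_eq_toFinset_card _ hf]
  exact Nat.nth_le_nth_of_lt_card hf (by omega) (by omega)

end Destutter

section AccIndex

variable {S A : Type*} {c : ℕ → A}

noncomputable def accIndex (c : ℕ → A) (k : ℕ) : ℕ :=
  if {m | IsChange c m}.Infinite ∨ k < {m | IsChange c m}.ncard then Nat.nth (IsChange c) k
  else Nat.nth (IsChange c) ({m | IsChange c m}.ncard - 1)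

theorem sumElim_accPath (c : ℕ → A) (ρ : ℕ → S) (k : ℕ) :
    Sum.elim id id (accPath c ρ k) = ρ (accIndex c k) := by
  unfold accPath accIndex
  split_ifs <;> rfl

theorem accIndex_of_lt_ncard {k : ℕ} (hk : k < {m | IsChange c m}.ncard) :
    accIndex c k = Nat.nth (IsChange c) k :=
  if_pos (Or.inr hk)

theorem accIndex_of_ncard_le (hf : {m | IsChange c m}.Finite) {k : ℕ}
    (hk : {m | IsChange c m}.ncard ≤ k) :
    accIndex c k = Nat.nth (IsChange c) ({m | IsChange c m}.ncard - 1) :=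
  if_neg (by rintro (hinf | hlt) <;> [exact hinf hf; omega])

theorem stutterExpansion_comp_accIndex_of_infinite (hinf : {m | IsChange c m}.Infinite) :
    StutterExpansion (c ∘ accIndex c) c := by
  have hacc : accIndex c = Nat.nth (IsChange c) := funext fun k => if_pos (Or.inl hinf)
  rw [hacc]
  exact stutterExpansion_comp_of_isChange_subset_range (Nat.nth_strictMono hinf)
    (Nat.range_nth_of_infinite hinf).ge

theorem stutterExpansion_comp_accIndex_of_finite (hf : {m | IsChange c m}.Finite) :
    StutterExpansion (c ∘ accIndex c) c := by
  set N := {m | IsChange c m}.ncard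
  have hN : N = hf.toFinset.card := Set.ncard_eq_toFinset_card _ hf
  have hNpos : 0 < N := (Set.ncard_pos hf).2 ⟨0, isChange_zero⟩
  set last := Nat.nth (IsChange c) (N - 1)
  let j : ℕ → ℕ := fun k => if k < N then Nat.nth (IsChange c) k else last + (k - (N - 1))
  have hj : StrictMono j := by
    intro a b hab
    by_cases hb : b < N
    · simpa [j, hb, hab.trans hb] using Nat.nth_lt_nth_of_lt_card hf hab (hN ▸ hb)
    · by_cases ha : a < N
      · have : Nat.nth (IsChange c) a ≤ last := Nat.nth_le_nth_of_lt_card hf (by omega) (by omega)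
        simp only [j, ha, hb, if_true, if_false]
        omega
      · simp only [j, ha, hb, if_false]
        omega
  have hrange : {m | IsChange c m} ⊆ Set.range j := by
    intro m hm
    obtain ⟨n, hn, rfl⟩ := Nat.exists_lt_card_finite_nth_eq hf hm
    exact ⟨n, if_pos (hN ▸ hn)⟩
  have hcomp : c ∘ j = c ∘ accIndex c := by
    funext k
    by_cases hk : k < N
    · simp only [Function.comp_apply, j, hk, if_true, accIndex_of_lt_ncard hk]
    · simp only [Function.comp_apply, j, hk, if_false,
        accIndex_of_ncard_le hf (Nat.le_of_not_lt hk)]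
      exact eq_of_forall_not_isChange (Nat.le_add_right _ _)
        fun m hm _ hcm => (hcm.le_nth_ncard_sub_one hf).not_gt hm
  exact hcomp ▸ stutterExpansion_comp_of_isChange_subset_range hj hrange

theorem stutterExpansion_comp_accIndex (c : ℕ → A) : StutterExpansion (c ∘ accIndex c) c :=
  (Set.finite_or_infinite _).elim stutterExpansion_comp_accIndex_of_finite
    stutterExpansion_comp_accIndex_of_infinite

end AccIndex

theorem accPath_preserves_colors_general {S AP : Type*} (K : Kripke S (Set AP)) (P : Set AP)
    (ρ : ℕ → S) :
    SameDestutter (fun k => K.label (ρ k) ∩ P)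
      (fun k =>
        K.label (Sum.elim id id (accPath (fun m => K.label (ρ m) ∩ P) ρ k)) ∩ P) := by
  simp only [sumElim_accPath]
  exact ⟨_, stutterExpansion_comp_accIndex _, .refl _⟩

/-- `acc` preserves the sequence of colors: for a path `ρ` of `K`, the de-stuttered
sequence of colors (valuations `L(s) ∩ P`) along `ρ` equals the one along `acc(ρ)`
(recall `L^acc(s) = L(s)` and `L^acc(s_⊥) = L(s)`). -/
theorem accPath_preserves_colors {S AP : Type*} (K : Kripke S (Set AP)) (P : Set AP)
    (ρ : ℕ → S) (hρ : IsPath K ρ) :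
    SameDestutter (fun k => K.label (ρ k) ∩ P)
      (fun k =>
        K.label (Sum.elim id id (accPath (fun m => K.label (ρ m) ∩ P) ρ k)) ∩ P) :=
  accPath_preserves_colors_general K P ρ
end

section
/- If two traces σ₁ and σ₂ admit stuttering expansions σ₁*, σ₂* such that σ₁*(k) ∩ P = σ₂*(k) ∩ P for all k (i.e., they can be aligned to agree on P at every step), then σ₁ and σ₂ have the same de-stuttered color sequence with respect to P. -/
structure IsStutterMap {A : Type*} (σ σ' : ℕ → A) (j : ℕ → ℕ) : Prop where
  map_zero : j 0 = 0
  strictMono : StrictMono j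
  apply_eq : ∀ k l, j k ≤ l → l < j (k + 1) → σ k = σ' l

def ConstFrom {A : Type*} (f : ℕ → A) (k : ℕ) : Prop :=
  ∀ l, k ≤ l → f l = f k

open Classical in
noncomputable def nextChange {A : Type*} (f : ℕ → A) (k : ℕ) : ℕ :=
  if h : ∃ m, k ≤ m ∧ f m ≠ f k then Nat.find h else k + 1

noncomputable def destutterIndex {A : Type*} (f : ℕ → A) : ℕ → ℕ
  | 0 => 0
  | n + 1 => nextChange f (destutterIndex f n)

noncomputable def destutter {A : Type*} (f : ℕ → A) (n : ℕ) : A :=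
  f (destutterIndex f n)

theorem StrictMono.exists_le_and_lt_succ {j : ℕ → ℕ} (hj : StrictMono j) (hj0 : j 0 = 0)
    (l : ℕ) : ∃ t, j t ≤ l ∧ l < j (t + 1) := by
  classical
  have hex : ∃ t, l < j (t + 1) := ⟨l, (Nat.lt_succ_self l).trans_le (hj.le_apply)⟩
  refine ⟨Nat.find hex, ?_, Nat.find_spec hex⟩
  rcases h : Nat.find hex with _ | s
  · exact hj0.le.trans (Nat.zero_le l)
  · exact not_lt.mp (Nat.find_min hex (h ▸ Nat.lt_succ_self s))

section nextChange

variable {A : Type*} {f : ℕ → A} {k : ℕ}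

theorem not_constFrom_iff : ¬ ConstFrom f k ↔ ∃ m, k ≤ m ∧ f m ≠ f k := by
  simp [ConstFrom]

theorem nextChange_of_constFrom (h : ConstFrom f k) : nextChange f k = k + 1 :=
  dif_neg fun hex => not_constFrom_iff.mpr hex h

theorem apply_nextChange_ne (h : ¬ ConstFrom f k) : f (nextChange f k) ≠ f k := by
  classical
  have hex := not_constFrom_iff.mp h
  rw [nextChange, dif_pos hex]
  exact (Nat.find_spec hex).2

theorem lt_nextChange (f : ℕ → A) (k : ℕ) : k < nextChange f k := by
  by_cases h : ConstFrom f k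
  · exact nextChange_of_constFrom h ▸ Nat.lt_succ_self k
  · classical
    have hex := not_constFrom_iff.mp h
    have hle : k ≤ nextChange f k := by
      rw [nextChange, dif_pos hex]
      exact (Nat.find_spec hex).1
    exact hle.lt_of_ne fun heq => apply_nextChange_ne h (by rw [← heq])

theorem apply_eq_of_lt_nextChange {l : ℕ} (hkl : k ≤ l) (hl : l < nextChange f k) :
    f l = f k := by
  classical
  by_contra hne
  have hex : ∃ m, k ≤ m ∧ f m ≠ f k := ⟨l, hkl, hne⟩
  rw [nextChange, dif_pos hex] at hl
  exact Nat.find_min hex hl ⟨hkl, hne⟩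

theorem nextChange_eq_of_apply_ne {m : ℕ} (hkm : k ≤ m) (hm : f m ≠ f k)
    (hconst : ∀ l, k ≤ l → l < m → f l = f k) : nextChange f k = m := by
  classical
  have hex : ∃ m, k ≤ m ∧ f m ≠ f k := ⟨m, hkm, hm⟩
  rw [nextChange, dif_pos hex, Nat.find_eq_iff]
  exact ⟨⟨hkm, hm⟩, fun l hlm ⟨hkl, hl⟩ => hl (hconst l hkl hlm)⟩

end nextChange
theorem strictMono_destutterIndex {A : Type*} (f : ℕ → A) : StrictMono (destutterIndex f) :=
  strictMono_nat_of_lt_succ fun n => lt_nextChange f (destutterIndex f n)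

theorem stutterExpansion_destutter {A : Type*} (f : ℕ → A) : StutterExpansion (destutter f) f :=
  ⟨destutterIndex f, rfl, strictMono_destutterIndex f,
    fun _ _ hkl hl => (apply_eq_of_lt_nextChange hkl hl).symm⟩

namespace IsStutterMap

variable {A : Type*} {a c : ℕ → A} {j : ℕ → ℕ} (hj : IsStutterMap a c j)
include hj

theorem apply_map (k : ℕ) : c (j k) = a k :=
  (hj.apply_eq k (j k) le_rfl (hj.strictMono (Nat.lt_succ_self k))).symm

theorem exists_apply_eq {k m l : ℕ} (hkl : j k ≤ l) (hlm : l < j m) :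
    ∃ t, k ≤ t ∧ t < m ∧ c l = a t := by
  obtain ⟨t, htl, hlt⟩ := hj.strictMono.exists_le_and_lt_succ hj.map_zero l
  refine ⟨t, ?_, ?_, (hj.apply_eq t l htl hlt).symm⟩
  · exact Nat.le_of_lt_succ (hj.strictMono.lt_iff_lt.mp (hkl.trans_lt hlt))
  · exact hj.strictMono.lt_iff_lt.mp (htl.trans_lt hlm)

theorem constFrom_map {k : ℕ} (h : ConstFrom a k) : ConstFrom c (j k) := by
  intro l hkl
  obtain ⟨t, hkt, -, hl⟩ := hj.exists_apply_eq hkl (l.lt_succ_self.trans_le hj.strictMono.le_apply)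
  rw [hl, hj.apply_map, h t hkt]

theorem nextChange_map {k : ℕ} (h : ¬ ConstFrom a k) :
    nextChange c (j k) = j (nextChange a k) := by
  refine nextChange_eq_of_apply_ne (hj.strictMono.monotone (lt_nextChange a k).le) ?_ ?_
  · rw [hj.apply_map, hj.apply_map]
    exact apply_nextChange_ne h
  · intro l hkl hlm
    obtain ⟨t, hkt, htm, hl⟩ := hj.exists_apply_eq hkl hlm
    rw [hl, hj.apply_map, apply_eq_of_lt_nextChange hkt htm]

theorem destutterIndex_map (n : ℕ) :
    destutterIndex c n = j (destutterIndex a n) ∨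
      ∃ m < n, destutterIndex c m = j (destutterIndex a m) ∧ ConstFrom a (destutterIndex a m) := by
  induction n with
  | zero => exact Or.inl hj.map_zero.symm
  | succ n ih =>
    rcases ih with heq | ⟨m, hmn, hm⟩
    · by_cases hconst : ConstFrom a (destutterIndex a n)
      · exact Or.inr ⟨n, Nat.lt_succ_self n, heq, hconst⟩
      · left
        change nextChange c _ = j (nextChange a _)
        rw [heq, hj.nextChange_map hconst]
    · exact Or.inr ⟨m, hmn.trans (Nat.lt_succ_self n), hm⟩

theorem destutter_eq : destutter a = destutter c := by
  funext n
  rcases hj.destutterIndex_map n with heq | ⟨m, hmn, heq, hconst⟩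
  · rw [destutter, destutter, heq, hj.apply_map]
  · have hconst_c := heq ▸ hj.constFrom_map hconst
    calc destutter a n = a (destutterIndex a m) :=
          hconst _ ((strictMono_destutterIndex a).monotone hmn.le)
      _ = c (destutterIndex c m) := by rw [heq, hj.apply_map]
      _ = destutter c n :=
          (hconst_c _ ((strictMono_destutterIndex c).monotone hmn.le)).symm

end IsStutterMap

theorem StutterExpansion.destutter_eq {A : Type*} {a c : ℕ → A} (h : StutterExpansion a c) :
    destutter a = destutter c :=
  let ⟨_, hj0, hj, hblk⟩ := h
  IsStutterMap.destutter_eq ⟨hj0, hj, hblk⟩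

theorem StutterExpansion.comp {A B : Type*} {σ σ' : ℕ → A} (h : StutterExpansion σ σ')
    (g : A → B) : StutterExpansion (g ∘ σ) (g ∘ σ') :=
  let ⟨j, hj0, hj, hblk⟩ := h
  ⟨j, hj0, hj, fun k l hkl hl => congrArg g (hblk k l hkl hl)⟩

theorem SameDestutter.of_stutterExpansion {A : Type*} {a b c : ℕ → A}
    (ha : StutterExpansion a c) (hb : StutterExpansion b c) : SameDestutter a b := by
  refine ⟨destutter a, stutterExpansion_destutter a, ?_⟩
  rw [ha.destutter_eq, ← hb.destutter_eq]
  exact stutterExpansion_destutter b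

/-- If two traces `σ₁`, `σ₂` admit stuttering expansions that agree on `P` at every
step, then `σ₁` and `σ₂` have the same de-stuttered color sequence w.r.t. `P`. -/
theorem aligned_expansions_same_color_sequence {AP : Type*} (P : Set AP)
    (σ₁ σ₂ σ₁s σ₂s : ℕ → Set AP)
    (h₁ : StutterExpansion σ₁ σ₁s) (h₂ : StutterExpansion σ₂ σ₂s)
    (hP : ∀ k, σ₁s k ∩ P = σ₂s k ∩ P) :
    SameDestutter (fun k => σ₁ k ∩ P) (fun k => σ₂ k ∩ P) := by
  have hcolor : (· ∩ P) ∘ σ₂s = (· ∩ P) ∘ σ₁s := funext fun k => (hP k).symm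
  exact .of_stutterExpansion (h₁.comp (· ∩ P)) (hcolor ▸ h₂.comp (· ∩ P))
end
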